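/- Let d ≥ 1. The Terwilliger algebra T of the wreath power (K_2)^{≀d} has ℂ-dimension (d+1)^2 + d(d−1)/2 and is isomorphic as a ℂ-algebra to M_{d+1}(ℂ) × ℂ^{d(d−1)/2} (i.e., M_{d+1}(ℂ) ⊕ M_1(ℂ)^{⊕ d(d−1)/2}). -/

import Mathlib

open scoped Classical

noncomputable section

/-- Relation `R i` of the wreath product scheme `K_{n 1} ≀ ⋯ ≀ K_{n d}`
(coordinates 0-indexed): `R 0` is the identity relation; for `1 ≤ i ≤ d`,
`(x, y) ∈ R i` iff coordinate `i - 1` is the largest coordinate where `x`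
and `y` differ. -/
def wRel (d : ℕ) (n : Fin d → ℕ) (i : ℕ) (x y : ∀ k : Fin d, Fin (n k)) : Prop :=
  if h : 1 ≤ i ∧ i ≤ d then
    x ⟨i - 1, by omega⟩ ≠ y ⟨i - 1, by omega⟩ ∧
      ∀ k : Fin d, i - 1 < (k : ℕ) → x k = y k
  else x = y

/-- Adjacency matrix `A i`. -/
def wA (d : ℕ) (n : Fin d → ℕ) (i : ℕ) :
    Matrix (∀ k : Fin d, Fin (n k)) (∀ k : Fin d, Fin (n k)) ℂ :=
  Matrix.of fun x y => if wRel d n i x y then 1 else 0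

/-- The base vertex `(1, 1, …, 1)` (0-indexed: all coordinates `0`). -/
def wBase (d : ℕ) (n : Fin d → ℕ) (hn : ∀ k, 2 ≤ n k) : ∀ k : Fin d, Fin (n k) :=
  fun k => ⟨0, by have := hn k; omega⟩

/-- Dual idempotent `E_i^*` with respect to the base vertex. -/
def wE (d : ℕ) (n : Fin d → ℕ) (hn : ∀ k, 2 ≤ n k) (i : ℕ) :
    Matrix (∀ k : Fin d, Fin (n k)) (∀ k : Fin d, Fin (n k)) ℂ :=
  Matrix.of fun y z => if y = z ∧ wRel d n i (wBase d n hn) y then 1 else 0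

/-- `T₀`: the linear span of the triple products `E_i^* A_j E_h^*`. -/
def wT0 (d : ℕ) (n : Fin d → ℕ) (hn : ∀ k, 2 ≤ n k) :
    Submodule ℂ (Matrix (∀ k : Fin d, Fin (n k)) (∀ k : Fin d, Fin (n k)) ℂ) :=
  Submodule.span ℂ
    {M | ∃ i j h : ℕ, i ≤ d ∧ j ≤ d ∧ h ≤ d ∧
      M = wE d n hn i * wA d n j * wE d n hn h}

/-- The Terwilliger algebra: the unital subalgebra generated by the `A i`
and the `E_i^*`. -/
def wT (d : ℕ) (n : Fin d → ℕ) (hn : ∀ k, 2 ≤ n k) :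
    Subalgebra ℂ (Matrix (∀ k : Fin d, Fin (n k)) (∀ k : Fin d, Fin (n k)) ℂ) :=
  Algebra.adjoin ℂ
    ({M | ∃ i ≤ d, M = wA d n i} ∪ {M | ∃ i ≤ d, M = wE d n hn i})

/-- The constant family for the wreath power `(K_2)^{≀d}`: `n_k = 2` for all `k`. -/
abbrev nc (d m : ℕ) : Fin d → ℕ := fun _ => m

/-- The Terwilliger algebra of the wreath power `(K_m)^{≀d}`. -/
def Tpow (d m : ℕ) (hm : 2 ≤ m) :
    Subalgebra ℂ (Matrix (∀ k : Fin d, Fin (nc d m k)) (∀ k : Fin d, Fin (nc d m k)) ℂ) :=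
  wT d (nc d m) fun _ => hm

/-!
Let `K_m` (`agreeMat`) be the 0/1 matrix of "agreeing in all coordinates `≥ m`". Then
`K_m = A_0 + ⋯ + A_m` and `K_a K_b` is a multiple of `K_{max a b}`, so the normalised `Q_m`
(`avgMat`) satisfy `Q_a Q_b = Q_{max a b}` and the differences `Q_l - Q_{l+1}` are orthogonal
idempotents.

For `K_2` the `i`-th sphere around `x₀` is a single agreement class of level `i - 1`. Hence `E_i^*`
commutes with `Q_l` for `l < i`, and `E_i^* K_m E_i^*` is the all-ones block `E_i^* J E_i^*` once
`m ≥ i - 1`. The normalised blocks `E_i^* J E_h^*` (`0 ≤ i, h ≤ d`) are `(d + 1)²` matrix units,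
the `E_i^* (Q_l - Q_{l+1}) E_i^*` (`l + 1 < i ≤ d`) are `d(d - 1)/2` further orthogonal
idempotents, and telescoping `Q_0 - Q_{i-1}` shows that `E_i^*` is the sum of the `i`-th diagonal
unit and the `E_i^* (Q_l - Q_{l+1}) E_i^*`. These elements lie in `T` and generate it, and a
complete system of this shape is the image of an injective algebra map from
`M_{d+1}(ℂ) × ℂ^{d(d-1)/2}`.
-/

open Finset

section MatrixUnits

variable {R A n ι : Type*} [CommSemiring R] [Semiring A] [Algebra R A]
  [Fintype n] [Fintype ι]

variable (R) in
def unitCombination (e : n → n → A) (p : ι → A) : Matrix n n R × (ι → R) →ₗ[R] A where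
  toFun x := ∑ a, ∑ b, x.1 a b • e a b + ∑ q, x.2 q • p q
  map_add' x y := by
    simp only [Prod.fst_add, Prod.snd_add, Matrix.add_apply, Pi.add_apply, add_smul,
      sum_add_distrib]
    abel
  map_smul' r x := by
    simp only [Prod.smul_fst, Prod.smul_snd, Matrix.smul_apply, Pi.smul_apply, smul_eq_mul,
      mul_smul, ← smul_sum, smul_add, RingHom.id_apply]

variable [DecidableEq n]

structure IsMatrixUnitSystem (e : n → n → A) (p : ι → A) : Prop where
  e_mul_e : ∀ a b c d, e a b * e c d = if b = c then e a d else 0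
  orthogonalIdempotents : OrthogonalIdempotents p
  e_mul_p : ∀ a b q, e a b * p q = 0
  p_mul_e : ∀ q a b, p q * e a b = 0
  sum_eq_one : ∑ a, e a a + ∑ q, p q = 1

variable {e : n → n → A} {p : ι → A}

namespace IsMatrixUnitSystem

theorem unitCombination_one (h : IsMatrixUnitSystem e p) :
    unitCombination R e p 1 = 1 := by
  simp [unitCombination, Matrix.one_apply, h.sum_eq_one]

variable [DecidableEq ι]

theorem unitCombination_mul (h : IsMatrixUnitSystem e p) (x y : Matrix n n R × (ι → R)) :
    unitCombination R e p (x * y) = unitCombination R e p x * unitCombination R e p y := by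
  simp only [unitCombination, LinearMap.coe_mk, AddHom.coe_mk, add_mul, mul_add, sum_mul,
    mul_sum, smul_mul_smul_comm, h.e_mul_e, h.e_mul_p, h.p_mul_e,
    h.orthogonalIdempotents.mul_eq, smul_ite, smul_zero, sum_ite_eq', mem_univ, if_true,
    sum_const_zero, add_zero, zero_add, Prod.fst_mul, Prod.snd_mul, Matrix.mul_apply,
    Pi.mul_apply, sum_smul]
  congr 1
  rw [sum_congr rfl fun a _ => sum_comm, sum_comm]
  exact sum_congr rfl fun i _ => sum_comm

variable (R) in
def lift (h : IsMatrixUnitSystem e p) : Matrix n n R × (ι → R) →ₐ[R] A :=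
  AlgHom.ofLinearMap (unitCombination R e p) h.unitCombination_one h.unitCombination_mul

theorem lift_apply (h : IsMatrixUnitSystem e p) (x : Matrix n n R × (ι → R)) :
    h.lift R x = ∑ a, ∑ b, x.1 a b • e a b + ∑ q, x.2 q • p q := rfl

variable (R) in
theorem e_mem_range (h : IsMatrixUnitSystem e p) (a b : n) : e a b ∈ (h.lift R).range :=
  ⟨(Matrix.single a b 1, 0), by simp [lift_apply, Matrix.single_apply, ite_and]⟩

variable (R) in
theorem p_mem_range (h : IsMatrixUnitSystem e p) (q : ι) : p q ∈ (h.lift R).range :=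
  ⟨(0, Pi.single q 1), by simp [lift_apply, Pi.single_apply]⟩

theorem range_le (h : IsMatrixUnitSystem e p) {S : Subalgebra R A} (he : ∀ a b, e a b ∈ S)
    (hp : ∀ q, p q ∈ S) : (h.lift R).range ≤ S := by
  rintro _ ⟨x, rfl⟩
  change h.lift R x ∈ S
  rw [lift_apply]
  exact add_mem (sum_mem fun a _ => sum_mem fun b _ => S.smul_mem (he a b) _)
    (sum_mem fun q _ => S.smul_mem (hp q) _)

theorem e_mul_lift_mul_e (h : IsMatrixUnitSystem e p) (x : Matrix n n R × (ι → R)) (a b : n) :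
    e a a * h.lift R x * e b b = x.1 a b • e a b := by
  simp [lift_apply, mul_add, sum_mul, mul_sum, h.e_mul_e, h.e_mul_p]

theorem p_mul_lift_mul_p (h : IsMatrixUnitSystem e p) (x : Matrix n n R × (ι → R)) (q : ι) :
    p q * h.lift R x * p q = x.2 q • p q := by
  simp [lift_apply, mul_add, mul_sum, h.p_mul_e, h.orthogonalIdempotents.mul_eq]

end IsMatrixUnitSystem
end MatrixUnits

theorem IsMatrixUnitSystem.lift_injective {K A n ι : Type*} [Field K] [Ring A] [Algebra K A]
    [Fintype n] [DecidableEq n] [Fintype ι] [DecidableEq ι] {e : n → n → A} {p : ι → A}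
    (h : IsMatrixUnitSystem e p) (he : ∀ a, e a a ≠ 0) (hp : ∀ q, p q ≠ 0) :
    Function.Injective (h.lift K) := by
  rw [injective_iff_map_eq_zero]
  intro x hx
  ext a b
  · have hab : e a b ≠ 0 := fun h0 => he a (by simpa [h0] using (h.e_mul_e a b b a).symm)
    have := h.e_mul_lift_mul_e x a b
    rw [hx, mul_zero, zero_mul, eq_comm, smul_eq_zero] at this
    exact this.resolve_right hab
  · have := h.p_mul_lift_mul_p x a
    rw [hx, mul_zero, zero_mul, eq_comm, smul_eq_zero] at this
    exact this.resolve_right (hp a)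

theorem orthogonalIdempotents_sub_succ {A : Type*} [Ring A] {Q : ℕ → A}
    (hQ : ∀ a b, Q a * Q b = Q (max a b)) : OrthogonalIdempotents fun l => Q l - Q (l + 1) := by
  refine ⟨fun l => ?_, fun l l' hne => ?_⟩
  · simp only [IsIdempotentElem, sub_mul, mul_sub, hQ, max_self,
      max_eq_right (Nat.le_succ l), max_eq_left (Nat.le_succ l)]
    abel
  · simp only [sub_mul, mul_sub, hQ]
    rcases Nat.lt_or_gt_of_ne hne with h | h
    · rw [max_eq_right h.le, max_eq_right (by omega : l ≤ l' + 1), max_eq_right (h : l + 1 ≤ l'),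
        max_eq_right (by omega : l + 1 ≤ l' + 1)]
      abel
    · rw [max_eq_left h.le, max_eq_left (by omega : l' ≤ l + 1), max_eq_left (h : l' + 1 ≤ l),
        max_eq_left (by omega : l' + 1 ≤ l + 1)]
      abel

namespace WreathPower

open Finset Matrix

variable {d : ℕ} {n : Fin d → ℕ}

abbrev Vertex (d : ℕ) (n : Fin d → ℕ) : Type := ∀ k : Fin d, Fin (n k)

def Agree (m : ℕ) (x y : Vertex d n) : Prop := ∀ k : Fin d, m ≤ (k : ℕ) → x k = y k

theorem agree_refl (m : ℕ) (x : Vertex d n) : Agree m x x := fun _ _ => rfl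

theorem Agree.symm {m : ℕ} {x y : Vertex d n} (h : Agree m x y) : Agree m y x :=
  fun k hk => (h k hk).symm

theorem Agree.trans {m : ℕ} {x y z : Vertex d n} (hxy : Agree m x y) (hyz : Agree m y z) :
    Agree m x z :=
  fun k hk => (hxy k hk).trans (hyz k hk)

theorem Agree.mono {m m' : ℕ} {x y : Vertex d n} (h : Agree m x y) (hm : m ≤ m') :
    Agree m' x y :=
  fun k hk => h k (hm.trans hk)

theorem agree_comm {m : ℕ} {x y : Vertex d n} : Agree m x y ↔ Agree m y x :=
  ⟨Agree.symm, Agree.symm⟩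

theorem agree_zero_iff {x y : Vertex d n} : Agree 0 x y ↔ x = y :=
  ⟨fun h => funext fun k => h k k.val.zero_le, fun h => h ▸ agree_refl 0 x⟩

theorem agree_of_le {m : ℕ} (hm : d ≤ m) (x y : Vertex d n) : Agree m x y :=
  fun k hk => absurd (hm.trans hk) (not_le.mpr k.isLt)

def relIndex (x y : Vertex d n) : ℕ :=
  Nat.find (p := fun m => Agree m x y) ⟨d, agree_of_le le_rfl x y⟩

theorem relIndex_le_iff {m : ℕ} {x y : Vertex d n} : relIndex x y ≤ m ↔ Agree m x y := by
  rw [relIndex, Nat.find_le_iff]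
  exact ⟨fun ⟨l, hl, h⟩ => h.mono hl, fun h => ⟨m, le_rfl, h⟩⟩

theorem relIndex_le (x y : Vertex d n) : relIndex x y ≤ d :=
  relIndex_le_iff.mpr (agree_of_le le_rfl x y)

theorem relIndex_comm (x y : Vertex d n) : relIndex x y = relIndex y x :=
  le_antisymm (relIndex_le_iff.mpr (relIndex_le_iff.mp le_rfl).symm)
    (relIndex_le_iff.mpr (relIndex_le_iff.mp le_rfl).symm)

theorem relIndex_le_max (x y z : Vertex d n) :
    relIndex x z ≤ max (relIndex x y) (relIndex y z) :=
  relIndex_le_iff.mpr <| ((relIndex_le_iff.mp le_rfl).mono (le_max_left _ _)).trans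
    ((relIndex_le_iff.mp le_rfl).mono (le_max_right _ _))

/-- The ultrametric triangle is isosceles. -/
theorem relIndex_eq_max_of_ne {x y z : Vertex d n} (h : relIndex x y ≠ relIndex x z) :
    relIndex y z = max (relIndex x y) (relIndex x z) := by
  have h₁ := relIndex_le_max y x z
  have h₂ := relIndex_le_max x y z
  have h₃ := relIndex_le_max x z y
  rw [relIndex_comm y x] at h₁
  rw [relIndex_comm z y] at h₃
  omega

theorem relIndex_eq_of_lt {x y z : Vertex d n} (h : relIndex y z < relIndex x y) :
    relIndex x z = relIndex x y := by
  have h₁ := relIndex_le_max x y z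
  have h₂ := relIndex_le_max x z y
  rw [relIndex_comm z y] at h₂
  omega

theorem wRel_iff {i : ℕ} (hi : i ≤ d) {x y : Vertex d n} : wRel d n i x y ↔ relIndex x y = i := by
  unfold wRel
  split_ifs with h
  · obtain ⟨j, rfl⟩ : ∃ j, i = j + 1 := ⟨i - 1, by omega⟩
    rw [relIndex, Nat.find_eq_iff]
    simp only [Nat.add_sub_cancel]
    constructor
    · rintro ⟨hne, hagree⟩
      exact ⟨hagree, fun m hm ha => hne (ha ⟨j, by omega⟩ (by simpa using Nat.le_of_lt_succ hm))⟩
    · rintro ⟨ha, hlt⟩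
      refine ⟨fun heq => hlt j (Nat.lt_succ_self j) fun k hk => ?_, ha⟩
      rcases hk.eq_or_lt with hjk | hjk
      · exact (Fin.ext hjk.symm : k = ⟨j, _⟩) ▸ heq
      · exact ha k hjk
  · obtain rfl : i = 0 := by omega
    rw [← Nat.le_zero, relIndex_le_iff, agree_zero_iff]

variable (n) in
def agreeMat (m : ℕ) : Matrix (Vertex d n) (Vertex d n) ℂ :=
  of fun x y => if Agree m x y then 1 else 0

variable (n) in
def classSize (m : ℕ) : ℕ := ∏ k ∈ univ.filter (fun k : Fin d => (k : ℕ) < m), n k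

theorem agreeMat_zero : agreeMat n 0 = 1 := by
  ext x y
  simp [agreeMat, agree_zero_iff, Matrix.one_apply]

theorem agreeMat_eq_sum_wA {m : ℕ} (hm : m ≤ d) :
    agreeMat n m = ∑ j ∈ range (m + 1), wA d n j := by
  ext x y
  have hj : ∀ j ∈ range (m + 1), wA d n j x y = if relIndex x y = j then 1 else 0 :=
    fun j hj => by
      rw [wA, of_apply, if_congr (wRel_iff (by simp at hj; omega)) rfl rfl]
  simp only [Matrix.sum_apply, sum_congr rfl hj, sum_ite_eq, agreeMat, of_apply, mem_range,
    Nat.lt_succ_iff, relIndex_le_iff]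

theorem card_agree (m : ℕ) (y : Vertex d n) : #(univ.filter (Agree m · y)) = classSize n m := by
  have : univ.filter (Agree m · y) =
      Fintype.piFinset fun k : Fin d => if m ≤ (k : ℕ) then {y k} else univ := by
    ext x
    rw [mem_filter, Fintype.mem_piFinset]
    refine (and_iff_right (mem_univ x)).trans (forall_congr' fun k => ?_)
    split_ifs <;> simp [*]
  rw [this, Fintype.card_piFinset, classSize, prod_filter]
  refine prod_congr rfl fun k _ => ?_
  split_ifs <;> first | omega | simp

theorem agreeMat_mul_agreeMat_of_le {a b : ℕ} (hab : a ≤ b) :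
    agreeMat n a * agreeMat n b = (classSize n a : ℂ) • agreeMat n b := by
  ext x y
  have hz : ∀ z, agreeMat n a x z * agreeMat n b z y =
      (if Agree a z x then 1 else 0) * agreeMat n b x y := fun z => by
    by_cases hxz : Agree a x z
    · have hb : Agree b z y ↔ Agree b x y :=
        ⟨(hxz.mono hab).trans, (hxz.symm.mono hab).trans⟩
      simp [agreeMat, hxz, hxz.symm, hb]
    · simp [agreeMat, hxz, agree_comm]
  simp only [mul_apply, hz, ← sum_mul, sum_boole, card_agree, Matrix.smul_apply, smul_eq_mul]

theorem agreeMat_transpose (m : ℕ) : (agreeMat n m)ᵀ = agreeMat n m := by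
  ext x y
  simp [agreeMat, agree_comm]

theorem agreeMat_mul_agreeMat (a b : ℕ) :
    agreeMat n a * agreeMat n b = (classSize n (min a b) : ℂ) • agreeMat n (max a b) := by
  rcases le_total a b with hab | hba
  · rw [min_eq_left hab, max_eq_right hab, agreeMat_mul_agreeMat_of_le hab]
  · rw [min_eq_right hba, max_eq_left hba, ← transpose_transpose (agreeMat n a * _),
      transpose_mul, agreeMat_transpose, agreeMat_transpose, agreeMat_mul_agreeMat_of_le hba,
      transpose_smul, agreeMat_transpose]

theorem agreeMat_top_apply (x y : Vertex d n) : agreeMat n d x y = 1 :=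
  if_pos (agree_of_le le_rfl x y)

theorem classSize_zero : classSize n 0 = 1 := by
  simp [classSize]

theorem classSize_ne_zero [∀ k, NeZero (n k)] (m : ℕ) : (classSize n m : ℂ) ≠ 0 :=
  Nat.cast_ne_zero.mpr (prod_ne_zero_iff.mpr fun k _ => NeZero.ne (n k))

variable (n) in
def avgMat (m : ℕ) : Matrix (Vertex d n) (Vertex d n) ℂ :=
  (classSize n m : ℂ)⁻¹ • agreeMat n m

theorem avgMat_apply_self (m : ℕ) (x : Vertex d n) : avgMat n m x x = (classSize n m : ℂ)⁻¹ := by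
  simp [avgMat, agreeMat, agree_refl]

theorem avgMat_zero : avgMat n 0 = 1 := by
  simp [avgMat, classSize_zero, agreeMat_zero]

theorem avgMat_mul_avgMat [∀ k, NeZero (n k)] (a b : ℕ) :
    avgMat n a * avgMat n b = avgMat n (max a b) := by
  rw [avgMat, avgMat, avgMat, smul_mul_smul_comm, agreeMat_mul_agreeMat, smul_smul]
  congr 1
  rcases le_total a b with hab | hba
  · rw [min_eq_left hab, max_eq_right hab]
    field_simp [classSize_ne_zero a]
  · rw [min_eq_right hba, max_eq_left hba]
    field_simp [classSize_ne_zero b]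

theorem avgMat_mul_agreeMat_top [∀ k, NeZero (n k)] {m : ℕ} (hm : m ≤ d) :
    avgMat n m * agreeMat n d = agreeMat n d := by
  rw [avgMat, smul_mul_assoc, agreeMat_mul_agreeMat, min_eq_left hm, max_eq_right hm, smul_smul,
    inv_mul_cancel₀ (classSize_ne_zero m), one_smul]

theorem agreeMat_top_mul_avgMat [∀ k, NeZero (n k)] {m : ℕ} (hm : m ≤ d) :
    agreeMat n d * avgMat n m = agreeMat n d := by
  rw [avgMat, mul_smul_comm, agreeMat_mul_agreeMat, min_eq_right hm, max_eq_left hm, smul_smul,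
    inv_mul_cancel₀ (classSize_ne_zero m), one_smul]

theorem orthogonalIdempotents_avgMat_sub_succ [∀ k, NeZero (n k)] :
    OrthogonalIdempotents fun l => avgMat n l - avgMat n (l + 1) :=
  orthogonalIdempotents_sub_succ avgMat_mul_avgMat

theorem avgMat_sub_succ_mul_agreeMat_top [∀ k, NeZero (n k)] {l : ℕ} (hl : l + 1 ≤ d) :
    (avgMat n l - avgMat n (l + 1)) * agreeMat n d = 0 := by
  rw [sub_mul, avgMat_mul_agreeMat_top (by omega), avgMat_mul_agreeMat_top hl, sub_self]

theorem agreeMat_top_mul_avgMat_sub_succ [∀ k, NeZero (n k)] {l : ℕ} (hl : l + 1 ≤ d) :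
    agreeMat n d * (avgMat n l - avgMat n (l + 1)) = 0 := by
  rw [mul_sub, agreeMat_top_mul_avgMat (by omega), agreeMat_top_mul_avgMat hl, sub_self]

section Spheres

variable (hn : ∀ k, 2 ≤ n k)

variable (n) in
def sphereIndicator (i : ℕ) (y : Vertex d n) : ℂ := if relIndex (wBase d n hn) y = i then 1 else 0

theorem wE_eq_diagonal {i : ℕ} (hi : i ≤ d) : wE d n hn i = diagonal (sphereIndicator n hn i) := by
  ext y z
  by_cases hyz : y = z
  · subst hyz
    simp [wE, sphereIndicator, wRel_iff hi]
  · simp [wE, hyz]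

theorem wE_mul_wE {i h : ℕ} (hi : i ≤ d) (hh : h ≤ d) :
    wE d n hn i * wE d n hn h = if i = h then wE d n hn i else 0 := by
  rw [wE_eq_diagonal hn hi, wE_eq_diagonal hn hh, diagonal_mul_diagonal]
  split_ifs with hih
  · subst hih
    congr 1
    ext y
    unfold sphereIndicator
    split_ifs <;> simp
  · rw [← diagonal_zero]
    congr 1
    ext y
    unfold sphereIndicator
    split_ifs <;> simp_all

theorem sum_wE : ∑ i ∈ range (d + 1), wE d n hn i = 1 := by
  rw [sum_congr rfl fun i hi => wE_eq_diagonal hn (Nat.lt_succ_iff.mp (mem_range.mp hi)),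
    ← diagonal_one]
  ext y z
  rw [Matrix.sum_apply]
  by_cases hyz : y = z
  · subst hyz
    simp [sphereIndicator, relIndex_le]
  · simp [hyz]

theorem wE_commute_agreeMat {i m : ℕ} (hi : i ≤ d) (hm : m < i) :
    Commute (wE d n hn i) (agreeMat n m) := by
  rw [wE_eq_diagonal hn hi]
  ext x y
  simp only [diagonal_mul, mul_diagonal, agreeMat, of_apply, sphereIndicator]
  by_cases hxy : Agree m x y
  · have hlt := relIndex_le_iff.mpr hxy
    have hxy' := relIndex_le_iff.mpr hxy.symm
    by_cases hx : relIndex (wBase d n hn) x = i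
    · rw [if_pos hx, if_pos ((relIndex_eq_of_lt (by omega)).trans hx), one_mul, mul_one]
    · rw [if_neg hx, if_neg fun hy => hx ((relIndex_eq_of_lt (by omega)).trans hy), zero_mul,
        mul_zero]
  · simp [hxy]

theorem wE_mul_agreeMat_mul_wE_of_ne {i h : ℕ} (hi : i ≤ d) (hh : h ≤ d) (hih : i ≠ h) (m : ℕ) :
    wE d n hn i * agreeMat n m * wE d n hn h =
      if max i h ≤ m then wE d n hn i * agreeMat n d * wE d n hn h else 0 := by
  rw [wE_eq_diagonal hn hi, wE_eq_diagonal hn hh]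
  ext x y
  rw [mul_diagonal, diagonal_mul, apply_ite (fun M : Matrix _ _ ℂ => M x y), mul_diagonal,
    diagonal_mul, agreeMat_top_apply, Matrix.zero_apply]
  by_cases hx : relIndex (wBase d n hn) x = i
  · by_cases hy : relIndex (wBase d n hn) y = h
    · have hxy : relIndex x y = max i h := by
        rw [relIndex_eq_max_of_ne (hx.trans_ne (hih.trans_eq hy.symm)), hx, hy]
      simp [sphereIndicator, hx, hy, agreeMat, ← relIndex_le_iff, hxy]
    · simp [sphereIndicator, hy]
  · simp [sphereIndicator, hx]

theorem wE_commute_avgMat {i m : ℕ} (hi : i ≤ d) (hm : m < i) :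
    Commute (wE d n hn i) (avgMat n m) :=
  (wE_commute_agreeMat hn hi hm).smul_right _

theorem wE_commute_avgMat_sub_succ {i l : ℕ} (hi : i ≤ d) (hl : l + 1 < i) :
    Commute (wE d n hn i) (avgMat n l - avgMat n (l + 1)) :=
  (wE_commute_avgMat hn hi (by omega)).sub_right (wE_commute_avgMat hn hi hl)

theorem wE_mem_wT {i : ℕ} (hi : i ≤ d) : wE d n hn i ∈ wT d n hn :=
  Algebra.subset_adjoin (Or.inr ⟨i, hi, rfl⟩)

theorem agreeMat_mem_wT {m : ℕ} (hm : m ≤ d) : agreeMat n m ∈ wT d n hn := by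
  rw [agreeMat_eq_sum_wA hm]
  exact sum_mem fun j hj => Algebra.subset_adjoin (Or.inl ⟨j, by simp at hj; omega, rfl⟩)

theorem avgMat_mem_wT {m : ℕ} (hm : m ≤ d) : avgMat n m ∈ wT d n hn :=
  Subalgebra.smul_mem _ (agreeMat_mem_wT hn hm) _

end Spheres

theorem wA_mem_of_agreeMat_mem {S : Subalgebra ℂ (Matrix (Vertex d n) (Vertex d n) ℂ)}
    (hS : ∀ m ≤ d, agreeMat n m ∈ S) {j : ℕ} (hj : j ≤ d) : wA d n j ∈ S := by
  cases j with
  | zero => simpa [agreeMat_eq_sum_wA (Nat.zero_le d)] using hS 0 (Nat.zero_le d)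
  | succ j =>
    have h := agreeMat_eq_sum_wA (n := n) hj
    rw [sum_range_succ, ← agreeMat_eq_sum_wA (by omega)] at h
    rw [eq_sub_of_add_eq' h.symm]
    exact sub_mem (hS _ hj) (hS _ (by omega))

section TwoLetters

variable (hn : ∀ k, 2 ≤ nc d 2 k)

local notation "𝔼" => wE d (nc d 2) hn
local notation "𝕁" => agreeMat (nc d 2) d

def spherePoint (d i : ℕ) : Vertex d (nc d 2) := fun k => if (k : ℕ) + 1 = i then 1 else 0

/-- Over a two-letter alphabet each sphere is a single agreement class. -/
theorem relIndex_wBase_eq_iff {i : ℕ} (hi : i ≤ d) {y : Vertex d (nc d 2)} :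
    relIndex (wBase d (nc d 2) hn) y = i ↔ Agree (i - 1) y (spherePoint d i) := by
  rw [← wRel_iff hi, wRel]
  split_ifs with h
  · obtain ⟨j, rfl⟩ : ∃ j, i = j + 1 := ⟨i - 1, by omega⟩
    simp only [Nat.add_sub_cancel]
    have hval : ∀ k, (spherePoint d (j + 1) k : ℕ) = if (k : ℕ) = j then 1 else 0 := fun k => by
      simp only [spherePoint, Nat.add_right_cancel_iff]
      split_ifs <;> rfl
    constructor
    · rintro ⟨hne, hagree⟩ k hk
      rw [Fin.ext_iff, hval]
      rcases hk.eq_or_lt with hjk | hjk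
      · have hk : (⟨j + 1 - 1, by omega⟩ : Fin d) = k := Fin.ext (by simp [hjk])
        have hyk : (y k : ℕ) ≠ 0 := fun h0 =>
          hne (Fin.ext ((congrArg (fun a => (y a : ℕ)) hk).trans h0).symm)
        have := (y k).isLt
        change _ < 2 at this
        rw [if_pos hjk.symm]
        omega
      · rw [← hagree k hjk, if_neg hjk.ne']
        rfl
    · intro h
      refine ⟨fun h0 => ?_, fun k hk => ?_⟩
      · have := congrArg Fin.val (h0.trans (h ⟨j, _⟩ le_rfl))
        rw [hval, if_pos rfl] at this
        exact absurd this zero_ne_one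
      · rw [h k hk.le, Fin.ext_iff, hval, if_neg hk.ne']
        rfl
  · obtain rfl : i = 0 := by omega
    rw [Nat.zero_sub, agree_zero_iff, eq_comm]
    exact Eq.congr_right (funext fun k => if_neg (Nat.succ_ne_zero _)).symm

theorem sphereIndicator_two_eq {i : ℕ} (hi : i ≤ d) (y : Vertex d (nc d 2)) :
    sphereIndicator (nc d 2) hn i y = if Agree (i - 1) y (spherePoint d i) then 1 else 0 :=
  if_congr (relIndex_wBase_eq_iff hn hi) rfl rfl

theorem sphereIndicator_spherePoint {i : ℕ} (hi : i ≤ d) :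
    sphereIndicator (nc d 2) hn i (spherePoint d i) = 1 := by
  rw [sphereIndicator_two_eq hn hi, if_pos (agree_refl _ _)]

theorem classSize_two {m : ℕ} (hm : m ≤ d) : classSize (nc d 2) m = 2 ^ m := by
  rw [classSize, prod_const, Fin.card_filter_val_lt, min_eq_right hm]

theorem wE_mul_agreeMat_mul_wE_self {i m : ℕ} (hi : i ≤ d) (hm : i - 1 ≤ m) :
    𝔼 i * agreeMat (nc d 2) m * 𝔼 i = 𝔼 i * 𝕁 * 𝔼 i := by
  rw [wE_eq_diagonal hn hi]
  ext x y
  simp only [mul_diagonal, diagonal_mul, agreeMat_top_apply, sphereIndicator_two_eq hn hi]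
  by_cases hx : Agree (i - 1) x (spherePoint d i)
  · by_cases hy : Agree (i - 1) y (spherePoint d i)
    · simp [hx, hy, agreeMat, (hx.trans hy.symm).mono hm]
    · simp [hy]
  · simp [hx]

theorem agreeMat_top_mul_wE_mul_agreeMat_top {h : ℕ} (hh : h ≤ d) :
    𝕁 * 𝔼 h * 𝕁 = (classSize (nc d 2) (h - 1) : ℂ) • 𝕁 := by
  ext x y
  rw [wE_eq_diagonal hn hh, mul_apply]
  simp only [mul_diagonal, agreeMat_top_apply, Matrix.smul_apply, sphereIndicator_two_eq hn hh,
    one_mul, mul_one, smul_eq_mul, sum_boole, card_agree]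

def unitE (i h : ℕ) : Matrix (Vertex d (nc d 2)) (Vertex d (nc d 2)) ℂ :=
  (classSize (nc d 2) (h - 1) : ℂ)⁻¹ • (𝔼 i * 𝕁 * 𝔼 h)

def unitP (i l : ℕ) : Matrix (Vertex d (nc d 2)) (Vertex d (nc d 2)) ℂ :=
  𝔼 i * (avgMat (nc d 2) l - avgMat (nc d 2) (l + 1)) * 𝔼 i

theorem unitE_mul_unitE {a b c e : ℕ} (hb : b ≤ d) (hc : c ≤ d) :
    unitE hn a b * unitE hn c e = if b = c then unitE hn a e else 0 := by
  have hprod : 𝔼 a * 𝕁 * 𝔼 b * (𝔼 c * 𝕁 * 𝔼 e) = 𝔼 a * (𝕁 * (𝔼 b * 𝔼 c) * 𝕁) * 𝔼 e := by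
    simp only [mul_assoc]
  rw [unitE, unitE, smul_mul_smul_comm, hprod, wE_mul_wE hn hb hc]
  split_ifs with hbc
  · subst hbc
    rw [agreeMat_top_mul_wE_mul_agreeMat_top hn hb, mul_smul_comm, smul_mul_assoc, smul_smul,
      unitE]
    congr 1
    field_simp [classSize_ne_zero (b - 1)]
  · simp

theorem unitP_eq_wE_mul {i l : ℕ} (hi : i ≤ d) (hl : l + 1 < i) :
    unitP hn i l = 𝔼 i * (avgMat (nc d 2) l - avgMat (nc d 2) (l + 1)) := by
  rw [unitP, mul_assoc, ← (wE_commute_avgMat_sub_succ hn hi hl).eq, ← mul_assoc,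
    wE_mul_wE hn hi hi, if_pos rfl]

theorem unitP_eq_mul_wE {i l : ℕ} (hi : i ≤ d) (hl : l + 1 < i) :
    unitP hn i l = (avgMat (nc d 2) l - avgMat (nc d 2) (l + 1)) * 𝔼 i := by
  rw [unitP_eq_wE_mul hn hi hl, (wE_commute_avgMat_sub_succ hn hi hl).eq]

theorem wE_mul_unitP {b i l : ℕ} (hb : b ≤ d) (hi : i ≤ d) :
    𝔼 b * unitP hn i l = if b = i then unitP hn i l else 0 := by
  rw [unitP, ← mul_assoc, ← mul_assoc, wE_mul_wE hn hb hi]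
  split_ifs with hbi
  · rw [hbi]
  · simp

theorem unitP_mul_wE {b i l : ℕ} (hb : b ≤ d) (hi : i ≤ d) :
    unitP hn i l * 𝔼 b = if i = b then unitP hn i l else 0 := by
  rw [unitP, mul_assoc, wE_mul_wE hn hi hb]
  split_ifs <;> simp

theorem unitP_mul_unitP {i i' l l' : ℕ} (hi : i ≤ d) (hi' : i' ≤ d) (hl : l + 1 < i)
    (hl' : l' + 1 < i') :
    unitP hn i l * unitP hn i' l' = if i = i' ∧ l = l' then unitP hn i l else 0 := by
  rw [unitP_eq_mul_wE hn hi hl, unitP_eq_wE_mul hn hi' hl', mul_assoc, ← mul_assoc (𝔼 i),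
    wE_mul_wE hn hi hi']
  by_cases hii : i = i'
  · subst hii
    rw [if_pos rfl, (wE_commute_avgMat_sub_succ hn hi hl').eq, ← mul_assoc,
      orthogonalIdempotents_avgMat_sub_succ.mul_eq]
    simp only [true_and, ite_mul, zero_mul]
  · simp [hii]

theorem unitE_mul_unitP {a b i l : ℕ} (hb : b ≤ d) (hi : i ≤ d) (hl : l + 1 < i) :
    unitE hn a b * unitP hn i l = 0 := by
  rw [unitE, smul_mul_assoc, mul_assoc, wE_mul_unitP hn hb hi]
  split_ifs
  · rw [unitP_eq_mul_wE hn hi hl, mul_assoc, ← mul_assoc 𝕁,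
      agreeMat_top_mul_avgMat_sub_succ (by omega), zero_mul, mul_zero, smul_zero]
  · simp

theorem unitP_mul_unitE {a b i l : ℕ} (ha : a ≤ d) (hi : i ≤ d) (hl : l + 1 < i) :
    unitP hn i l * unitE hn a b = 0 := by
  rw [unitE, mul_smul_comm, ← mul_assoc, ← mul_assoc, unitP_mul_wE hn ha hi]
  split_ifs
  · rw [unitP_eq_wE_mul hn hi hl, mul_assoc _ _ 𝕁, avgMat_sub_succ_mul_agreeMat_top (by omega),
      mul_zero, zero_mul, smul_zero]
  · simp

theorem wE_mul_avgMat_mul_wE {i m : ℕ} (hi : i ≤ d) (hm : m ≤ i - 1) :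
    𝔼 i * avgMat (nc d 2) m * 𝔼 i = unitE hn i i + ∑ l ∈ Ico m (i - 1), unitP hn i l := by
  have htop : 𝔼 i * avgMat (nc d 2) (i - 1) * 𝔼 i = unitE hn i i := by
    rw [avgMat, mul_smul_comm, smul_mul_assoc, wE_mul_agreeMat_mul_wE_self hn hi le_rfl, unitE]
  have htel : ∑ l ∈ Ico m (i - 1), unitP hn i l =
      𝔼 i * avgMat (nc d 2) m * 𝔼 i - 𝔼 i * avgMat (nc d 2) (i - 1) * 𝔼 i := by
    rw [← neg_sub, ← sum_Ico_sub (fun l => 𝔼 i * avgMat (nc d 2) l * 𝔼 i) hm,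
      ← sum_neg_distrib]
    exact sum_congr rfl fun l _ => by rw [neg_sub, unitP, mul_sub, sub_mul]
  rw [htel, htop, add_sub_cancel]

theorem wE_eq_unitE_add_sum {i : ℕ} (hi : i ≤ d) :
    𝔼 i = unitE hn i i + ∑ l ∈ range (i - 1), unitP hn i l := by
  rw [range_eq_Ico, ← wE_mul_avgMat_mul_wE hn hi (Nat.zero_le _), avgMat_zero, mul_one,
    wE_mul_wE hn hi hi, if_pos rfl]

theorem isMatrixUnitSystem :
    IsMatrixUnitSystem (fun a b : Fin (d + 1) => unitE hn a b)
      (fun q : Σ i : Fin (d + 1), Fin (i - 1) => unitP hn q.1 q.2) where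
  e_mul_e a b c e := by simp [unitE_mul_unitE hn b.is_le c.is_le, Fin.val_inj]
  orthogonalIdempotents := OrthogonalIdempotents.iff_mul_eq.mpr <| by
    rintro ⟨i, l⟩ ⟨i', l'⟩
    dsimp only
    rw [unitP_mul_unitP hn i.is_le i'.is_le (by have := l.isLt; omega)
      (by have := l'.isLt; omega)]
    refine if_congr ⟨fun ⟨hi, hl⟩ => ?_, fun h => ?_⟩ rfl rfl
    · obtain rfl := Fin.ext hi
      exact congrArg _ (Fin.ext hl)
    · obtain ⟨rfl, hl⟩ := Sigma.mk.inj_iff.mp h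
      exact ⟨rfl, congrArg Fin.val (eq_of_heq hl)⟩
  e_mul_p a b q := unitE_mul_unitP hn b.is_le q.1.is_le (by have := q.2.isLt; omega)
  p_mul_e q a b := unitP_mul_unitE hn a.is_le q.1.is_le (by have := q.2.isLt; omega)
  sum_eq_one := by
    rw [Fintype.sum_sigma, ← sum_add_distrib]
    calc ∑ i : Fin (d + 1), (unitE hn i i + ∑ l : Fin (i - 1), unitP hn i l)
        = ∑ i : Fin (d + 1), 𝔼 i := sum_congr rfl fun i _ => by
          rw [Fin.sum_univ_eq_sum_range (unitP hn i), ← wE_eq_unitE_add_sum hn i.is_le]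
      _ = 1 := by rw [Fin.sum_univ_eq_sum_range (fun i => 𝔼 i), sum_wE]

theorem unitE_self_ne_zero {i : ℕ} (hi : i ≤ d) : unitE hn i i ≠ 0 := fun h => by
  have := congrFun (congrFun h (spherePoint d i)) (spherePoint d i)
  rw [unitE, Matrix.smul_apply, wE_eq_diagonal hn hi, mul_diagonal, diagonal_mul,
    sphereIndicator_spherePoint hn hi, agreeMat_top_apply, mul_one, mul_one, smul_eq_mul, mul_one,
    Matrix.zero_apply, inv_eq_zero] at this
  exact classSize_ne_zero _ this

theorem unitP_ne_zero {i l : ℕ} (hi : i ≤ d) (hl : l + 1 < i) : unitP hn i l ≠ 0 := fun h => by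
  have := congrFun (congrFun h (spherePoint d i)) (spherePoint d i)
  rw [unitP, wE_eq_diagonal hn hi, mul_diagonal, diagonal_mul, sphereIndicator_spherePoint hn hi,
    one_mul, mul_one, Matrix.sub_apply, avgMat_apply_self, avgMat_apply_self,
    classSize_two (by omega), classSize_two (by omega), Matrix.zero_apply, sub_eq_zero,
    _root_.inv_inj, Nat.cast_inj, pow_succ] at this
  have := Nat.two_pow_pos l
  omega

theorem wE_mul_agreeMat_top_mul_wE (i h : ℕ) :
    𝔼 i * 𝕁 * 𝔼 h = (classSize (nc d 2) (h - 1) : ℂ) • unitE hn i h := by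
  rw [unitE, smul_smul, mul_inv_cancel₀ (classSize_ne_zero _), one_smul]

theorem wE_mem_range_lift {i : ℕ} (hi : i ≤ d) :
    𝔼 i ∈ ((isMatrixUnitSystem hn).lift ℂ).range := by
  rw [wE_eq_unitE_add_sum hn hi]
  exact add_mem ((isMatrixUnitSystem hn).e_mem_range ℂ ⟨i, by omega⟩ ⟨i, by omega⟩)
    (sum_mem fun l hl => (isMatrixUnitSystem hn).p_mem_range ℂ
      ⟨⟨i, by omega⟩, ⟨l, mem_range.mp hl⟩⟩)

theorem wE_mul_agreeMat_mul_wE_mem_range_lift {i h m : ℕ} (hi : i ≤ d) (hh : h ≤ d) :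
    𝔼 i * agreeMat (nc d 2) m * 𝔼 h ∈ ((isMatrixUnitSystem hn).lift ℂ).range := by
  have hunit : ∀ {a b : ℕ}, a ≤ d → b ≤ d →
      𝔼 a * 𝕁 * 𝔼 b ∈ ((isMatrixUnitSystem hn).lift ℂ).range := fun ha hb => by
    rw [wE_mul_agreeMat_top_mul_wE]
    exact Subalgebra.smul_mem _
      ((isMatrixUnitSystem hn).e_mem_range ℂ ⟨_, Nat.lt_succ_of_le ha⟩ ⟨_, Nat.lt_succ_of_le hb⟩) _
  rcases eq_or_ne i h with rfl | hih
  · rcases le_total (i - 1) m with him | hmi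
    · rw [wE_mul_agreeMat_mul_wE_self hn hi him]
      exact hunit hi hi
    · have hK : agreeMat (nc d 2) m = (classSize (nc d 2) m : ℂ) • avgMat (nc d 2) m := by
        rw [avgMat, smul_smul, mul_inv_cancel₀ (classSize_ne_zero _), one_smul]
      rw [hK, mul_smul_comm, smul_mul_assoc, wE_mul_avgMat_mul_wE hn hi hmi]
      refine Subalgebra.smul_mem _ (add_mem ?_ (sum_mem fun l hl => ?_)) _
      · exact (isMatrixUnitSystem hn).e_mem_range ℂ ⟨i, by omega⟩ ⟨i, by omega⟩
      · exact (isMatrixUnitSystem hn).p_mem_range ℂ ⟨⟨i, by omega⟩, ⟨l, (mem_Ico.mp hl).2⟩⟩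
  · rw [wE_mul_agreeMat_mul_wE_of_ne hn hi hh hih]
    split_ifs
    · exact hunit hi hh
    · exact zero_mem _

theorem agreeMat_mem_range_lift (m : ℕ) :
    agreeMat (nc d 2) m ∈ ((isMatrixUnitSystem hn).lift ℂ).range := by
  have hsum : agreeMat (nc d 2) m =
      ∑ i ∈ range (d + 1), ∑ h ∈ range (d + 1), 𝔼 i * agreeMat (nc d 2) m * 𝔼 h := by
    simp only [← mul_sum, ← sum_mul, sum_wE, one_mul, mul_one]
  rw [hsum]
  exact sum_mem fun i hi => sum_mem fun h hh => wE_mul_agreeMat_mul_wE_mem_range_lift hn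
    (Nat.lt_succ_iff.mp (mem_range.mp hi)) (Nat.lt_succ_iff.mp (mem_range.mp hh))

theorem range_lift_eq_wT : ((isMatrixUnitSystem hn).lift ℂ).range = wT d (nc d 2) hn := by
  refine le_antisymm ((isMatrixUnitSystem hn).range_le (fun a b => ?_) fun q => ?_) ?_
  · exact Subalgebra.smul_mem _ (mul_mem (mul_mem (wE_mem_wT hn a.is_le)
      (agreeMat_mem_wT hn le_rfl)) (wE_mem_wT hn b.is_le)) _
  · have := q.2.isLt
    exact mul_mem (mul_mem (wE_mem_wT hn q.1.is_le) (sub_mem (avgMat_mem_wT hn (by omega))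
      (avgMat_mem_wT hn (by omega)))) (wE_mem_wT hn q.1.is_le)
  · refine Algebra.adjoin_le ?_
    rintro _ (⟨j, hj, rfl⟩ | ⟨i, hi, rfl⟩)
    · exact wA_mem_of_agreeMat_mem (fun m _ => agreeMat_mem_range_lift hn m) hj
    · exact wE_mem_range_lift hn hi

theorem injective_lift : Function.Injective ((isMatrixUnitSystem hn).lift ℂ) :=
  (isMatrixUnitSystem hn).lift_injective (fun a => unitE_self_ne_zero hn a.is_le)
    fun q => unitP_ne_zero hn q.1.is_le (by have := q.2.isLt; omega)

end TwoLetters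

theorem card_sigma_fin_pred (d : ℕ) :
    Fintype.card (Σ i : Fin (d + 1), Fin (i - 1)) = d * (d - 1) / 2 := by
  rw [Fintype.card_sigma]
  simp only [Fintype.card_fin]
  rw [Fin.sum_univ_eq_sum_range (· - 1), sum_range_succ']
  simp [sum_range_id]

end WreathPower

open WreathPower in
theorem terwilliger_wreath_power_K2_general (d : ℕ) :
    Module.finrank ℂ ↥(Tpow d 2 le_rfl) = (d + 1) ^ 2 + d * (d - 1) / 2 ∧
      Nonempty (↥(Tpow d 2 le_rfl) ≃ₐ[ℂ]
        Matrix (Fin (d + 1)) (Fin (d + 1)) ℂ × (Fin (d * (d - 1) / 2) → ℂ)) := by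
  have hn : ∀ k, 2 ≤ nc d 2 k := fun _ => le_rfl
  let model : (Matrix (Fin (d + 1)) (Fin (d + 1)) ℂ × ((Σ i : Fin (d + 1), Fin (i - 1)) → ℂ))
      ≃ₐ[ℂ] Tpow d 2 le_rfl :=
    (AlgEquiv.ofInjective _ (injective_lift hn)).trans
      (Subalgebra.equivOfEq _ _ (range_lift_eq_wT hn))
  refine ⟨?_, ⟨model.symm.trans (AlgEquiv.prodCongr AlgEquiv.refl
    (AlgEquiv.piCongrLeft ℂ (fun _ => ℂ) (Fintype.equivFinOfCardEq (card_sigma_fin_pred d))))⟩⟩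
  rw [← model.toLinearEquiv.finrank_eq, Module.finrank_prod, Module.finrank_matrix,
    Module.finrank_fintype_fun_eq_card, card_sigma_fin_pred, Module.finrank_self]
  simp [sq]

/-- For `d ≥ 1`, the Terwilliger algebra of the wreath power
`(K_2)^{≀d}` has `ℂ`-dimension `(d+1)² + d(d-1)/2` and is isomorphic as a
`ℂ`-algebra to `M_{d+1}(ℂ) × ℂ^{d(d-1)/2}`. -/
theorem terwilliger_wreath_power_K2 (d : ℕ) (hd : 1 ≤ d) :
    Module.finrank ℂ ↥(Tpow d 2 le_rfl) = (d + 1) ^ 2 + d * (d - 1) / 2 ∧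
      Nonempty (↥(Tpow d 2 le_rfl) ≃ₐ[ℂ]
        Matrix (Fin (d + 1)) (Fin (d + 1)) ℂ × (Fin (d * (d - 1) / 2) → ℂ)) :=
  terwilliger_wreath_power_K2_general d
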